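/- In the Max Swap Game on trees, an improving swap never increases the diameter: if v swaps edge vu to vw in tree T producing tree T' with ecc_{T'}(v) < ecc_T(v), then diam(T') ≤ diam(T). -/

import Mathlib

/-!
Let `H` be `T` with the edge `vu` deleted. `H` is a subgraph of both trees, so two vertices in
the same component of `H` are equally far apart in `T` and in `T'`. In particular a vertex `z`
farthest from `v` in `T` lies on the side of `u`, for otherwise
`ecc_T'(v) ≥ d_T'(v, z) = d_T(v, z) = ecc_T(v)`. For `x` on the side of `v`, every walk from `x`
to `z` in `T` crosses `vu`, so `d_T(x, z) ≥ d_T(x, v) + ecc_T(v) > d_T'(x, v) + ecc_T'(v)`, which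
bounds `d_T'(x, y)` for every `y`. Pairs on the side of `u` keep their distance.
-/

namespace NCG
open SimpleGraph

variable {V : Type*}

/-- Eccentricity of a vertex: maximum graph distance to any other vertex. -/
noncomputable def ecc [Fintype V] (G : SimpleGraph V) (x : V) : ℕ :=
  Finset.univ.sup fun y => G.dist x y

/-- Diameter: maximum eccentricity. -/
noncomputable def diam [Fintype V] (G : SimpleGraph V) : ℕ :=
  Finset.univ.sup fun x => ecc G x

/-- Radius: minimum eccentricity. -/
noncomputable def rad [Fintype V] (G : SimpleGraph V) : ℕ :=
  sInf (Set.range (ecc G))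

end NCG

namespace SimpleGraph

variable {V : Type*} {G H : SimpleGraph V}

lemma IsAcyclic.dist_eq_of_le_of_reachable (hG : G.IsAcyclic) (hHG : H ≤ G) {a b : V}
    (hab : H.Reachable a b) : G.dist a b = H.dist a b := by
  obtain ⟨p, hp, hpl⟩ := hab.exists_path_of_dist
  obtain ⟨q, hq, hql⟩ := (hab.mono hHG).exists_path_of_dist
  have hpq : (⟨q, hq⟩ : G.Path a b) = ⟨p.mapLe hHG, hp.mapLe hHG⟩ :=
    (hG.subsingleton_path a b).elim _ _
  rw [← hql, ← hpl, congrArg (fun r : G.Path a b => r.1.length) hpq, Walk.length_mapLe]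

lemma IsAcyclic.dist_eq_dist_of_reachable {G' : SimpleGraph V} (hG : G.IsAcyclic)
    (hG' : G'.IsAcyclic) (hHG : H ≤ G) (hHG' : H ≤ G') {a b : V} (hab : H.Reachable a b) :
    G.dist a b = G'.dist a b := by
  rw [hG.dist_eq_of_le_of_reachable hHG hab, hG'.dist_eq_of_le_of_reachable hHG' hab]

lemma Walk.dist_add_dist_le_length {a b c : V} (p : G.Walk a b) (hc : c ∈ p.support) :
    G.dist a c + G.dist c b ≤ p.length := by
  classical
  rw [← p.take_spec hc, Walk.length_append]
  exact add_le_add (dist_le _) (dist_le _)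

lemma Reachable.deleteEdges_reachable_or {v u x : V} (h : G.Reachable v x) :
    (G.deleteEdges {s(v, u)}).Reachable v x ∨ (G.deleteEdges {s(v, u)}).Reachable u x := by
  suffices ∀ {a : V} (q : G.Walk a x), (G.deleteEdges {s(v, u)}).Reachable v a ∨
      (G.deleteEdges {s(v, u)}).Reachable u a →
      (G.deleteEdges {s(v, u)}).Reachable v x ∨ (G.deleteEdges {s(v, u)}).Reachable u x from
    h.elim fun p => this p (.inl .rfl)
  intro a q
  clear h
  induction q with
  | nil => exact id
  | @cons a b _ hab _ ih =>
    intro ha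
    apply ih
    by_cases he : s(a, b) = s(v, u)
    · rcases Sym2.eq_iff.mp he with ⟨-, rfl⟩ | ⟨-, rfl⟩
      · exact .inr .rfl
      · exact .inl .rfl
    · have hab' : (G.deleteEdges {s(v, u)}).Adj a b := (deleteEdges_adj ..).mpr ⟨hab, he⟩
      exact ha.imp (·.trans hab'.reachable) (·.trans hab'.reachable)

lemma dist_add_dist_le_of_reachable_deleteEdges {v u x y : V} (hxy : G.Reachable x y)
    (hx : (G.deleteEdges {s(v, u)}).Reachable v x)
    (hy : ¬(G.deleteEdges {s(v, u)}).Reachable v y) :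
    G.dist x v + G.dist v y ≤ G.dist x y := by
  obtain ⟨p, hpl⟩ := hxy.exists_walk_length_eq_dist
  have hvu : s(v, u) ∈ p.edges := by
    by_contra hvu
    exact hy (hx.trans (p.toDeleteEdge _ hvu).reachable)
  exact hpl ▸ p.dist_add_dist_le_length (p.fst_mem_support_of_mem_edges hvu)

end SimpleGraph

namespace NCG

open SimpleGraph

variable {V : Type*}

section

variable [Fintype V]

lemma dist_le_ecc (G : SimpleGraph V) (x y : V) : G.dist x y ≤ ecc G x :=
  Finset.le_sup (f := fun y => G.dist x y) (Finset.mem_univ y)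

lemma ecc_le_diam (G : SimpleGraph V) (x : V) : ecc G x ≤ diam G :=
  Finset.le_sup (f := ecc G) (Finset.mem_univ x)

lemma exists_dist_eq_ecc (G : SimpleGraph V) (x : V) : ∃ y, G.dist x y = ecc G x := by
  obtain ⟨y, -, hy⟩ := Finset.exists_mem_eq_sup Finset.univ ⟨x, Finset.mem_univ x⟩
    fun y => G.dist x y
  exact ⟨y, hy.symm⟩

lemma dist_le_diam_of_reachable_deleteEdges {T T' : SimpleGraph V} (hT : T.IsTree)
    (hT' : T'.IsTree) {v u : V} (hle : T.deleteEdges {s(v, u)} ≤ T')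
    (himp : ecc T' v < ecc T v) {x : V} (hx : (T.deleteEdges {s(v, u)}).Reachable v x) (y : V) :
    T'.dist x y ≤ diam T := by
  have hxv : T'.dist x v = T.dist x v :=
    hT'.isAcyclic.dist_eq_dist_of_reachable hT.isAcyclic hle (deleteEdges_le _) hx.symm
  obtain ⟨z, hz⟩ := exists_dist_eq_ecc T v
  have hz_far : ¬(T.deleteEdges {s(v, u)}).Reachable v z := by
    intro hvz
    have hvz' : T'.dist v z = T.dist v z :=
      hT'.isAcyclic.dist_eq_dist_of_reachable hT.isAcyclic hle (deleteEdges_le _) hvz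
    have := dist_le_ecc T' v z
    omega
  calc T'.dist x y ≤ T'.dist x v + T'.dist v y := hT'.connected.dist_triangle
    _ ≤ T.dist x v + T.dist v z := by rw [hxv, hz]; have := dist_le_ecc T' v y; omega
    _ ≤ T.dist x z := dist_add_dist_le_of_reachable_deleteEdges (hT.connected x z) hx hz_far
    _ ≤ diam T := (dist_le_ecc T x z).trans (ecc_le_diam T x)

end

theorem stmt10_general [Fintype V] (T T' : SimpleGraph V)
    (hT : T.IsTree) (hT't : T'.IsTree)
    (v u w : V)
    (hT'edges : T'.edgeSet = (T.edgeSet \ {s(v, u)}) ∪ {s(v, w)})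
    (himp : ecc T' v < ecc T v) :
    diam T' ≤ diam T := by
  set H := T.deleteEdges {s(v, u)}
  have hHT' : H ≤ T' := by
    rw [← edgeSet_subset_edgeSet, hT'edges, edgeSet_deleteEdges]
    exact Set.subset_union_left
  have hside (x : V) : H.Reachable v x ∨ H.Reachable u x :=
    (hT.connected v x).deleteEdges_reachable_or
  refine Finset.sup_le fun x _ => Finset.sup_le fun y _ => ?_
  by_cases hxy : H.Reachable x y
  · rw [hT't.isAcyclic.dist_eq_dist_of_reachable hT.isAcyclic hHT' (deleteEdges_le _) hxy]
    exact (dist_le_ecc T x y).trans (ecc_le_diam T x)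
  rcases hside x with hx | hx
  · exact dist_le_diam_of_reachable_deleteEdges hT hT't hHT' himp hx y
  rcases hside y with hy | hy
  · rw [dist_comm]
    exact dist_le_diam_of_reachable_deleteEdges hT hT't hHT' himp hy x
  · exact absurd (hx.symm.trans hy) hxy

/-- an improving swap never increases the diameter of a tree. -/
theorem stmt10 [Fintype V] [DecidableEq V] (T T' : SimpleGraph V)
    (hT : T.IsTree) (hT't : T'.IsTree)
    (v u w : V) (hvu : T.Adj v u)
    (hT'edges : T'.edgeSet = (T.edgeSet \ {s(v, u)}) ∪ {s(v, w)})
    (himp : ecc T' v < ecc T v) :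
    diam T' ≤ diam T :=
  stmt10_general T T' hT hT't v u w hT'edges himp

end NCG
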